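/- Let w be a word over {a,b,α,β} and let u be an infinite binary word fixed by the composed morphism φ_w. If u starts with the letter 0 and w starts with the letter a, then w contains no occurrence of b or β (i.e., w ∈ {a,α}*). -/

import Mathlib

/-- φ_a : 0 ↦ 0, 1 ↦ 10. -/
def φa : Monoid.End (FreeMonoid Bool) :=
  FreeMonoid.lift fun x => if x then FreeMonoid.of true * FreeMonoid.of false else FreeMonoid.of false

/-- φ_b : 0 ↦ 0, 1 ↦ 01. -/
def φb : Monoid.End (FreeMonoid Bool) :=
  FreeMonoid.lift fun x => if x then FreeMonoid.of false * FreeMonoid.of true else FreeMonoid.of false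

/-- φ_α : 0 ↦ 01, 1 ↦ 1. -/
def φα : Monoid.End (FreeMonoid Bool) :=
  FreeMonoid.lift fun x => if x then FreeMonoid.of true else FreeMonoid.of false * FreeMonoid.of true

/-- φ_β : 0 ↦ 10, 1 ↦ 1. -/
def φβ : Monoid.End (FreeMonoid Bool) :=
  FreeMonoid.lift fun x => if x then FreeMonoid.of true else FreeMonoid.of true * FreeMonoid.of false

/-- The exchange morphism E : 0 ↦ 1, 1 ↦ 0. -/
def Eend : Monoid.End (FreeMonoid Bool) := FreeMonoid.map not

inductive Letter | a | b | α | β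
deriving DecidableEq

/-- The elementary Sturmian morphism associated to a letter of {a, b, α, β}. -/
def phiOf : Letter → Monoid.End (FreeMonoid Bool)
  | Letter.a => φa
  | Letter.b => φb
  | Letter.α => φα
  | Letter.β => φβ

/-- The composed morphism φ_w = φ_{w₀} ∘ φ_{w₁} ∘ ⋯ ∘ φ_{w_{n-1}}. -/
def phiW (w : List Letter) : Monoid.End (FreeMonoid Bool) := (w.map phiOf).prod

/-- `w` is a normalized name: it contains no factor α a^k β and no factor a α^k b. -/
def NormalizedW (w : List Letter) : Prop :=
  ∀ k : ℕ, ¬ ([Letter.α] ++ List.replicate k Letter.a ++ [Letter.β]) <:+: w ∧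
           ¬ ([Letter.a] ++ List.replicate k Letter.α ++ [Letter.b]) <:+: w

/-- The prefix of length `n` of an infinite binary word, as an element of the free monoid. -/
def prefWord (u : ℕ → Bool) (n : ℕ) : FreeMonoid Bool :=
  FreeMonoid.ofList ((List.range n).map u)

/-- `InfMap f u v` : the infinite word `v` is the image of the infinite word `u` under the
endomorphism `f` (extended letterwise), i.e. the image of every prefix of `u` is a prefix of `v`. -/
def InfMap (f : Monoid.End (FreeMonoid Bool)) (u v : ℕ → Bool) : Prop :=
  ∀ n k, k < (FreeMonoid.toList (f (prefWord u n))).length →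
    (FreeMonoid.toList (f (prefWord u n))).getD k false = v k

/-! Split `w = p d r` at its first letter `d ∉ {a, α}`. If `d = b`, then `p` starts with `a`, so
it ends with `a α^k` and `a α^k b` is a factor of `w`. If `d = β` and `p` contains `α`, then `p`
ends with `α a^k` and `α a^k β` is a factor. Otherwise `w = a^m β r`: `φ_β` makes every nonempty
word start with `1` and `φ_a` keeps a leading `1`, so `φ_w(u₀)`, hence `u`, starts with `1`. -/

namespace List

theorem exists_eq_append_cons_of_exists_not {α : Type*} {P : α → Prop} :
    ∀ {w : List α}, (∃ c ∈ w, ¬ P c) →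
      ∃ p d r, w = p ++ d :: r ∧ (∀ c ∈ p, P c) ∧ ¬ P d
  | [], ⟨_, hc, _⟩ => absurd hc not_mem_nil
  | c :: t, h => by
    by_cases hc : P c
    · obtain ⟨p, d, r, rfl, hp, hd⟩ := exists_eq_append_cons_of_exists_not
        (by simpa [hc] using h)
      exact ⟨c :: p, d, r, rfl, by simpa [hc] using hp, hd⟩
    · exact ⟨[], c, t, rfl, by simp, hc⟩

theorem exists_eq_append_cons_replicate {α : Type*} {x y : α} {p : List α}
    (hp : ∀ c ∈ p, c = x ∨ c = y) (hy : y ∈ p) :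
    ∃ p₁ k, p = p₁ ++ y :: replicate k x := by
  induction p using reverseRecOn with
  | nil => exact absurd hy not_mem_nil
  | append_singleton q c ih =>
    by_cases hcy : c = y
    · exact ⟨q, 0, by simp [hcy]⟩
    · obtain rfl := (hp c (by simp)).resolve_right hcy
      have hyq : y ∈ q := by simpa [Ne.symm hcy] using hy
      obtain ⟨p₁, k, rfl⟩ := ih (fun d hd => hp d (by simp [hd])) hyq
      exact ⟨p₁, k + 1, by simp [replicate_succ']⟩

end List

lemma phiOf_ne_one (ℓ : Letter) {s : FreeMonoid Bool} (hs : s ≠ 1) : phiOf ℓ s ≠ 1 := by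
  cases s with
  | one => exact absurd rfl hs
  | of_mul x t =>
    rw [map_mul, Ne, ← FreeMonoid.length_eq_zero, FreeMonoid.length_mul]
    have : 0 < (phiOf ℓ (FreeMonoid.of x)).length := by cases ℓ <;> cases x <;> decide
    omega

lemma phiW_ne_one (w : List Letter) {s : FreeMonoid Bool} (hs : s ≠ 1) : phiW w s ≠ 1 := by
  induction w with
  | nil => exact hs
  | cons ℓ w ih => exact phiOf_ne_one ℓ ih

lemma head?_φβ {s : FreeMonoid Bool} (hs : s ≠ 1) : (φβ s).toList.head? = some true := by
  cases s with
  | one => exact absurd rfl hs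
  | of_mul x t =>
    rw [map_mul, FreeMonoid.toList_mul, List.head?_append]
    cases x <;> rfl

lemma head?_φa {s : FreeMonoid Bool} (hs : s.toList.head? = some true) :
    (φa s).toList.head? = some true := by
  cases s with
  | one => simp at hs
  | of_mul x t =>
    obtain rfl : x = true := by simpa using hs
    rw [map_mul, FreeMonoid.toList_mul, List.head?_append]
    rfl

lemma head?_phiW_replicate_a_β (m : ℕ) (r : List Letter) {s : FreeMonoid Bool} (hs : s ≠ 1) :
    (phiW (List.replicate m Letter.a ++ Letter.β :: r) s).toList.head? = some true := by
  induction m with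
  | zero => exact head?_φβ (phiW_ne_one r hs)
  | succ m ih => exact head?_φa ih

lemma InfMap.apply_zero {f : Monoid.End (FreeMonoid Bool)} {u v : ℕ → Bool} (h : InfMap f u v)
    {c : Bool} (hc : (f (FreeMonoid.of (u 0))).toList.head? = some c) : v 0 = c := by
  have hpref : prefWord u 1 = FreeMonoid.of (u 0) := rfl
  obtain ⟨t, ht⟩ : ∃ t, (f (prefWord u 1)).toList = c :: t := by
    rw [hpref]; exact List.head?_eq_some_iff.mp hc
  simpa [ht] using (h 1 0 (by simp [ht])).symm

/-- If the fixed point `u` of `φ_w` starts with `0` and the normalized name `w` starts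
with the letter `a`, then `w ∈ {a, α}*`. -/
theorem fixed_point_prefix_letter (w : List Letter) (u : ℕ → Bool)
    (hnorm : NormalizedW w)
    (hfix : InfMap (phiW w) u u)
    (hu0 : u 0 = false)
    (hhead : w.head? = some Letter.a) :
    ∀ c ∈ w, c = Letter.a ∨ c = Letter.α := by
  by_contra hbad
  obtain ⟨p, d, r, rfl, hp, hd⟩ :=
    List.exists_eq_append_cons_of_exists_not (P := fun c => c = Letter.a ∨ c = Letter.α)
      (by simpa using hbad)
  obtain rfl | rfl : d = Letter.b ∨ d = Letter.β := by cases d <;> simp_all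
  · have ha : Letter.a ∈ p := by
      cases p with
      | nil => simp at hhead
      | cons c p => simp_all
    obtain ⟨p₁, k, rfl⟩ := List.exists_eq_append_cons_replicate (fun c hc => (hp c hc).symm) ha
    exact (hnorm k).2 ⟨p₁, r, by simp⟩
  · by_cases hα : Letter.α ∈ p
    · obtain ⟨p₁, k, rfl⟩ := List.exists_eq_append_cons_replicate hp hα
      exact (hnorm k).1 ⟨p₁, r, by simp⟩
    · have hp_a : p = List.replicate p.length Letter.a := List.eq_replicate_of_mem fun c hc =>
        (hp c hc).resolve_right (ne_of_mem_of_not_mem hc hα)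
      rw [hp_a] at hfix
      have := hfix.apply_zero
        (head?_phiW_replicate_a_β _ r (FreeMonoid.of_ne_one (u 0)))
      simp [hu0] at this
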